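/- Let (Ω, F, P) be a probability space, h > 0, θ ∈ ℝ, and B : [0,∞) → Ω → ℝ a process with B_0 = 0 a.s., each B_t square integrable and centered. For each N let Γ^{(N)} be the N×N matrix with entries Γ^{(N)}_{l,m} = E[(B_{lh} - B_{(l-1)h})(B_{mh} - B_{(m-1)h})], assumed positive definite, let z_N = (h,...,h)ᵀ ∈ ℝ^N, ΔX^{(N)} = (θh + B_{kh} - B_{(k-1)h})_{k=1}^N, and θ̂^{(N)} = (z_Nᵀ (Γ^{(N)})⁻¹ ΔX^{(N)})/(z_Nᵀ (Γ^{(N)})⁻¹ z_N). Then for all positive integers N₂ ≤ N₃, E[(θ̂^{(N₃)} - θ)(θ̂^{(N₂)} - θ)] = 1/(z_{N₃}ᵀ (Γ^{(N₃)})⁻¹ z_{N₃}). -/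

import Mathlib

open Matrix MeasureTheory

/-- Product of two `L²` functions is integrable (via the polarization trick). -/
lemma integrable_mul_of_memL2' {Ω : Type*} [MeasureSpace Ω] {P : Measure Ω}
    {f g : Ω → ℝ} (hf : MemLp f 2 P) (hg : MemLp g 2 P) :
    Integrable (fun ω => f ω * g ω) P := by
  have h1 : Integrable (fun ω => (f ω + g ω) ^ 2) P := by
    simpa using (hf.add hg).integrable_sq
  have h2 := hf.integrable_sq
  have h3 := hg.integrable_sq
  have h4 := ((h1.sub h2).sub h3).div_const 2
  exact h4.congr (Filter.Eventually.of_forall fun ω => by simp only [Pi.sub_apply]; ring)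

/-- Covariance identity for the sequence of discrete maximum likelihood estimators:
for `N₂ ≤ N₃`, `E[(θ̂^{(N₃)} − θ)(θ̂^{(N₂)} − θ)] = 1/(z_{N₃}ᵀ(Γ^{(N₃)})⁻¹z_{N₃})`. -/
theorem mle_covariance_identity
    {Ω : Type*} [MeasureSpace Ω] (P : Measure Ω) [IsProbabilityMeasure P]
    (h θ : ℝ) (hh : 0 < h)
    (B : ℝ → Ω → ℝ)
    (hB0 : ∀ᵐ ω ∂P, B 0 ω = 0)
    (hL2 : ∀ t : ℝ, 0 ≤ t → MemLp (B t) 2 P)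
    (hcentered : ∀ t : ℝ, 0 ≤ t → ∫ ω, B t ω ∂P = 0)
    (Γ : (N : ℕ) → Matrix (Fin N) (Fin N) ℝ)
    (hΓdef : ∀ (N : ℕ) (l m : Fin N),
      Γ N l m = ∫ ω, (B ((l + 1 : ℕ) * h) ω - B ((l : ℕ) * h) ω) *
        (B ((m + 1 : ℕ) * h) ω - B ((m : ℕ) * h) ω) ∂P)
    (hΓpos : ∀ N : ℕ, (Γ N).PosDef)
    (z : (N : ℕ) → Fin N → ℝ) (hz : ∀ (N : ℕ) (k : Fin N), z N k = h)
    (ΔX : (N : ℕ) → Ω → Fin N → ℝ)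
    (hΔX : ∀ (N : ℕ) (ω : Ω) (k : Fin N),
      ΔX N ω k = θ * h + (B ((k + 1 : ℕ) * h) ω - B ((k : ℕ) * h) ω))
    (θhat : (N : ℕ) → Ω → ℝ)
    (hθhat : ∀ (N : ℕ) (ω : Ω), θhat N ω =
      (z N ⬝ᵥ (Γ N)⁻¹ *ᵥ ΔX N ω) / (z N ⬝ᵥ (Γ N)⁻¹ *ᵥ z N))
    (N₂ N₃ : ℕ) (hN₂ : 1 ≤ N₂) (hN₂₃ : N₂ ≤ N₃) :
    ∫ ω, (θhat N₃ ω - θ) * (θhat N₂ ω - θ) ∂P =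
      1 / (z N₃ ⬝ᵥ (Γ N₃)⁻¹ *ᵥ z N₃) := by
  classical
  -- the increments
  set D : (N : ℕ) → Fin N → Ω → ℝ :=
    fun N k ω => B ((k + 1 : ℕ) * h) ω - B ((k : ℕ) * h) ω with hD
  have hDL2 : ∀ (N : ℕ) (k : Fin N), MemLp (D N k) 2 P := by
    intro N k
    exact (hL2 _ (by positivity)).sub (hL2 _ (by positivity))
  -- positivity of the normalizing constants
  have hcpos : ∀ N : ℕ, 0 < N → 0 < z N ⬝ᵥ (Γ N)⁻¹ *ᵥ z N := by
    intro N hN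
    have hz0 : z N ≠ 0 := by
      intro hzz
      have h0 := congrFun hzz ⟨0, hN⟩
      rw [hz] at h0
      exact hh.ne' (by simpa using h0)
    have := ((hΓpos N).inv).dotProduct_mulVec_pos hz0
    simpa using this
  have hN₃ : 1 ≤ N₃ := le_trans hN₂ hN₂₃
  have hc₂ : 0 < z N₂ ⬝ᵥ (Γ N₂)⁻¹ *ᵥ z N₂ := hcpos N₂ hN₂
  have hc₃ : 0 < z N₃ ⬝ᵥ (Γ N₃)⁻¹ *ᵥ z N₃ := hcpos N₃ hN₃
  set c₂ := z N₂ ⬝ᵥ (Γ N₂)⁻¹ *ᵥ z N₂ with hc₂def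
  set c₃ := z N₃ ⬝ᵥ (Γ N₃)⁻¹ *ᵥ z N₃ with hc₃def
  set w : (N : ℕ) → Fin N → ℝ := fun N => z N ᵥ* (Γ N)⁻¹ with hw
  -- key pointwise formula for the centered estimator
  have key : ∀ (N : ℕ), 0 < N → ∀ ω : Ω, θhat N ω - θ =
      (∑ k, w N k * D N k ω) / (z N ⬝ᵥ (Γ N)⁻¹ *ᵥ z N) := by
    intro N hN ω
    have hcN : (z N ⬝ᵥ (Γ N)⁻¹ *ᵥ z N) ≠ 0 := (hcpos N hN).ne'
    have hX : ΔX N ω = θ • z N + fun k => D N k ω := by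
      funext k
      simp only [Pi.add_apply, Pi.smul_apply, smul_eq_mul, hΔX, hz, hD]
    have hdot : z N ⬝ᵥ (Γ N)⁻¹ *ᵥ (fun k => D N k ω) = ∑ k, w N k * D N k ω := by
      rw [dotProduct_mulVec]
      simp [hw, dotProduct]
    rw [hθhat, hX, mulVec_add, mulVec_smul, dotProduct_add, dotProduct_smul, hdot,
      smul_eq_mul]
    rw [add_div, mul_div_assoc, div_self hcN, mul_one]
    ring
  -- integrability and covariance of increments
  have hint : ∀ (l : Fin N₃) (m : Fin N₂), Integrable (fun ω => D N₃ l ω * D N₂ m ω) P :=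
    fun l m => integrable_mul_of_memL2' (hDL2 _ _) (hDL2 _ _)
  have hcov : ∀ (l : Fin N₃) (m : Fin N₂),
      ∫ ω, D N₃ l ω * D N₂ m ω ∂P = Γ N₃ l (Fin.castLE hN₂₃ m) := by
    intro l m
    rw [hΓdef]
    simp [hD, Fin.coe_castLE]
  -- `w₃` applied to rows of `Γ₃` gives back `z₃`
  have hwΓ : (z N₃ ᵥ* (Γ N₃)⁻¹) ᵥ* Γ N₃ = z N₃ := by
    rw [vecMul_vecMul,
      Matrix.nonsing_inv_mul _ ((Matrix.isUnit_iff_isUnit_det _).1 (hΓpos N₃).isUnit),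
      vecMul_one]
  have hrow : ∀ m' : Fin N₃, ∑ l, w N₃ l * Γ N₃ l m' = h := by
    intro m'
    have h1 : (∑ l, w N₃ l * Γ N₃ l m') = ((z N₃ ᵥ* (Γ N₃)⁻¹) ᵥ* Γ N₃) m' := by
      simp [hw, Matrix.vecMul, dotProduct]
    rw [h1, hwΓ, hz]
  have hwz : ∑ m, w N₂ m * h = c₂ := by
    rw [hc₂def, dotProduct_mulVec]
    simp [hw, dotProduct, hz]
  -- main computation
  calc ∫ ω, (θhat N₃ ω - θ) * (θhat N₂ ω - θ) ∂P
      = ∫ ω, ∑ l : Fin N₃, ∑ m : Fin N₂,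
          (w N₃ l * w N₂ m / (c₃ * c₂)) * (D N₃ l ω * D N₂ m ω) ∂P := by
        refine integral_congr_ae (Filter.Eventually.of_forall fun ω => ?_)
        dsimp only
        rw [key N₃ hN₃ ω, key N₂ hN₂ ω, ← hc₂def, ← hc₃def, div_mul_div_comm,
          Finset.sum_mul_sum]
        simp only [Finset.sum_div]
        exact Finset.sum_congr rfl fun l _ => Finset.sum_congr rfl fun m _ => by ring
    _ = ∑ l : Fin N₃, ∑ m : Fin N₂,
          (w N₃ l * w N₂ m / (c₃ * c₂)) * ∫ ω, D N₃ l ω * D N₂ m ω ∂P := by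
        rw [integral_finset_sum _ fun l _ =>
          integrable_finset_sum _ fun m _ => (hint l m).const_mul _]
        refine Finset.sum_congr rfl fun l _ => ?_
        rw [integral_finset_sum _ fun m _ => (hint l m).const_mul _]
        exact Finset.sum_congr rfl fun m _ => integral_const_mul _ _
    _ = ∑ m : Fin N₂, (w N₂ m / (c₃ * c₂)) *
          ∑ l : Fin N₃, w N₃ l * Γ N₃ l (Fin.castLE hN₂₃ m) := by
        rw [Finset.sum_comm]
        refine Finset.sum_congr rfl fun m _ => ?_
        rw [Finset.mul_sum]
        exact Finset.sum_congr rfl fun l _ => by rw [hcov]; ring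
    _ = (∑ m : Fin N₂, w N₂ m * h) / (c₃ * c₂) := by
        rw [Finset.sum_div]
        exact Finset.sum_congr rfl fun m _ => by rw [hrow]; ring
    _ = 1 / c₃ := by
        rw [hwz]
        field_simp
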